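/- Let C be a category and F : Cᵒᵖ × C ⥤ C a bifunctor. Assume that for every object X of C the endofunctor F(X, −) has a chosen initial algebra (W X, in_X : F(X, W X) ⟶ W X), so that W extends to a functor Cᵒᵖ ⥤ C whose action W f on f : X' ⟶ X is the unique morphism with W f ∘ in_X = in_{X'} ∘ F(f, W f). Assume moreover that the endofunctor G : C ⥤ C given on objects by G X = F(W X, X) (with the evident functorial action induced by W and F) has a final coalgebra out : T' ⟶ F(W T', T'). Set T = W T'. Then the quadruple (T, T', in_{T'}, out) is an initial dialgebra for F. -/

import Mathlib

open CategoryTheory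

universe v u

variable {C : Type u} [Category.{v} C]

/-- The object part of a bifunctor `F : Cᵒᵖ × C ⥤ C`, contravariant in its
first and covariant in its second argument: `Fobj F B A = F(B, A)`. -/
def Fobj (F : Cᵒᵖ × C ⥤ C) (B A : C) : C :=
  F.obj (Opposite.op B, A)

/-- The morphism part of a bifunctor `F : Cᵒᵖ × C ⥤ C`: for `h' : B₁ ⟶ B₀`
and `h : A₀ ⟶ A₁`, `Fmap F h' h = F(h', h) : F(B₀, A₀) ⟶ F(B₁, A₁)`. -/
def Fmap (F : Cᵒᵖ × C ⥤ C) {B₀ B₁ A₀ A₁ : C} (h' : B₁ ⟶ B₀) (h : A₀ ⟶ A₁) :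
    Fobj F B₀ A₀ ⟶ Fobj F B₁ A₁ :=
  F.map (h'.op, h)

/-- A dialgebra for `F : Cᵒᵖ × C ⥤ C` : a quadruple `(A, B, f, g)` with
`f : F(B, A) ⟶ A` and `g : B ⟶ F(A, B)`. -/
structure Dialgebra (F : Cᵒᵖ × C ⥤ C) where
  A : C
  B : C
  f : Fobj F B A ⟶ A
  g : B ⟶ Fobj F A B

/-- `(h, h')` is a morphism of dialgebras from `D₀ = (A₀, B₀, f₀, g₀)` to
`D₁ = (A₁, B₁, f₁, g₁)` when `h ∘ f₀ = f₁ ∘ F(h', h)` and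
`F(h, h') ∘ g₁ = g₀ ∘ h'`. -/
def IsDialgebraHom (F : Cᵒᵖ × C ⥤ C) (D₀ D₁ : Dialgebra F)
    (h : D₀.A ⟶ D₁.A) (h' : D₁.B ⟶ D₀.B) : Prop :=
  D₀.f ≫ h = Fmap F h' h ≫ D₁.f ∧ D₁.g ≫ Fmap F h h' = h' ≫ D₀.g

/-- A dialgebra is initial when it admits exactly one dialgebra morphism to
every dialgebra for `F`. -/
def IsInitialDialgebra (F : Cᵒᵖ × C ⥤ C) (D : Dialgebra F) : Prop :=
  ∀ E : Dialgebra F, ∃! p : (D.A ⟶ E.A) × (E.B ⟶ D.B), IsDialgebraHom F D E p.1 p.2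

/-- `(WX, a)` is an initial algebra for the endofunctor `F(X, −)`. -/
def IsInitialAlgebraAt (F : Cᵒᵖ × C ⥤ C) (X WX : C) (a : Fobj F X WX ⟶ WX) : Prop :=
  ∀ (Y : C) (b : Fobj F X Y ⟶ Y), ∃! k : WX ⟶ Y, a ≫ k = Fmap F (𝟙 X) k ≫ b

lemma Fmap_comp' (F : Cᵒᵖ × C ⥤ C) {B₀ B₁ B₂ A₀ A₁ A₂ : C}
    (h'₁ : B₁ ⟶ B₀) (h₁ : A₀ ⟶ A₁) (h'₂ : B₂ ⟶ B₁) (h₂ : A₁ ⟶ A₂) :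
    Fmap F h'₁ h₁ ≫ Fmap F h'₂ h₂ = Fmap F (h'₂ ≫ h'₁) (h₁ ≫ h₂) := by
  unfold Fmap Fobj
  rw [← F.map_comp]
  rfl

/-- Given chosen initial algebras `(W X, in_X)` of the endofunctors
`F(X, −)`, making `W` a functor `Cᵒᵖ ⥤ C` with action `Wmap` characterized by
`W f ∘ in_X = in_{X'} ∘ F(f, W f)`, and given a final coalgebra
`out : T' ⟶ F(W T', T')` of the endofunctor `G = F(W −, −)` (whose action on
`k : Y ⟶ T'` is `F(W k, k)`), the quadruple `(T, T', in_{T'}, out)` with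
`T = W T'` is an initial dialgebra for `F`. -/
theorem initial_dialgebra_of_initial_algebras_and_final_coalgebra
    {C : Type u} [Category.{v} C] (F : Cᵒᵖ × C ⥤ C)
    (W : C → C) (inn : ∀ X : C, Fobj F X (W X) ⟶ W X)
    (hinit : ∀ X : C, IsInitialAlgebraAt F X (W X) (inn X))
    (Wmap : ∀ ⦃X' X : C⦄, (X' ⟶ X) → (W X ⟶ W X'))
    (hWmap : ∀ {X' X : C} (f : X' ⟶ X), inn X ≫ Wmap f = Fmap F f (Wmap f) ≫ inn X')
    (T' : C) (out : T' ⟶ Fobj F (W T') T')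
    (hfinal : ∀ (Y : C) (d : Y ⟶ Fobj F (W Y) Y),
      ∃! k : Y ⟶ T', k ≫ out = d ≫ Fmap F (Wmap k) k) :
    IsInitialDialgebra F ⟨W T', T', inn T', out⟩ := by
  intro E
  obtain ⟨φ, hφ, hφu⟩ := hinit E.B E.A E.f
  obtain ⟨h', hh', hh'u⟩ := hfinal E.B (E.g ≫ Fmap F φ (𝟙 E.B))
  have key : ∀ (k' : E.B ⟶ T'),
      inn T' ≫ (Wmap k' ≫ φ) = Fmap F k' (Wmap k' ≫ φ) ≫ E.f := by
    intro k'
    rw [← Category.assoc, hWmap, Category.assoc, hφ, ← Category.assoc,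
      Fmap_comp']
    simp
  refine ⟨(Wmap h' ≫ φ, h'), ⟨key h', ?_⟩, ?_⟩
  · show E.g ≫ Fmap F (Wmap h' ≫ φ) h' = h' ≫ out
    rw [hh', Category.assoc, Fmap_comp']
    simp
  · rintro ⟨k, k'⟩ ⟨c1, c2⟩
    dsimp only at c1 c2 ⊢
    obtain ⟨ψ, hψ, hψu⟩ := hinit T' E.A (Fmap F k' (𝟙 E.A) ≫ E.f)
    have hk : k = ψ := by
      refine hψu k ?_
      show inn T' ≫ k = Fmap F (𝟙 T') k ≫ Fmap F k' (𝟙 E.A) ≫ E.f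
      rw [c1, ← Category.assoc, Fmap_comp']
      simp
    have hk2 : Wmap k' ≫ φ = ψ := by
      refine hψu _ ?_
      show inn T' ≫ (Wmap k' ≫ φ) = Fmap F (𝟙 T') (Wmap k' ≫ φ) ≫ Fmap F k' (𝟙 E.A) ≫ E.f
      rw [key k', ← Category.assoc, Fmap_comp']
      simp
    have hkk : k = Wmap k' ≫ φ := hk.trans hk2.symm
    have hk' : k' = h' := by
      refine hh'u k' ?_
      show k' ≫ out = (E.g ≫ Fmap F φ (𝟙 E.B)) ≫ Fmap F (Wmap k') k'
      rw [← c2, hkk, Category.assoc, Fmap_comp']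
      simp
    simp [hk', hkk]
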